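/- Let g = g₁^{m₁} ⋯ g_r^{m_r} ∈ ℂ[x₁,…,xₙ] be a factorization into irreducibles and w ∈ ℂⁿ. The following are equivalent: (a) g is w-homogeneous; (b) each g_k is w-homogeneous; (c) the reduced polynomial g_red = g₁ ⋯ g_r is w-homogeneous. -/

import Mathlib

/-!
The Euler operator `δ = ∑ wᵢ xᵢ ∂ᵢ` multiplies the monomial `x^d` by its weight `∑ dᵢ wᵢ`, so `g`
is `w`-homogeneous exactly when all its monomials have the same weight, and such polynomials are
closed under products. Conversely, order `ℂ` lexicographically by real and imaginary part. Over a
domain, the top weighted component of `φ * ψ` is the product of the top components of `φ` and `ψ`,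
and likewise for the bottom ones. If `φ * ψ` is homogeneous, the top and bottom weights of the
product coincide, which forces the top and bottom weights of `φ` to agree: every factor of a
nonzero `w`-homogeneous polynomial is `w`-homogeneous.
-/

open MvPolynomial

/-- `g` is `w`-homogeneous when `∑ i, w i • x i ∂ i • g = λ g` for some `λ`. -/
def IsWHomogeneous (n : ℕ) (w : Fin n → ℂ) (g : MvPolynomial (Fin n) ℂ) : Prop :=
  ∃ lam : ℂ, (∑ i, C (w i) * X i * pderiv i g) = C lam * g

namespace MvPolynomial

open Finsupp

variable {σ R M : Type*} [CommSemiring R]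

lemma sum_C_mul_X_mul_pderiv_monomial [Fintype σ] (w : σ → R) (d : σ →₀ ℕ) (c : R) :
    ∑ i, C (w i) * X i * pderiv i (monomial d c) = C (weight w d) * monomial d c := by
  rw [weight_eq_sum, map_sum, Finset.sum_mul]
  refine Finset.sum_congr rfl fun i _ => ?_
  rw [mul_assoc, X_mul_pderiv_monomial, map_nsmul, smul_mul_assoc, mul_smul_comm]

lemma coeff_sum_C_mul_X_mul_pderiv [Fintype σ] (w : σ → R) (p : MvPolynomial σ R)
    (d : σ →₀ ℕ) :
    coeff d (∑ i, C (w i) * X i * pderiv i p) = weight w d * coeff d p := by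
  classical
  induction p using MvPolynomial.induction_on' with
  | monomial e c =>
    rw [sum_C_mul_X_mul_pderiv_monomial, coeff_C_mul, coeff_monomial]
    split_ifs with h
    · rw [h]
    · rw [mul_zero, mul_zero]
  | add p q hp hq => simp only [map_add, mul_add, Finset.sum_add_distrib, coeff_add, hp, hq]

lemma isWeightedHomogeneous_comp_addEquiv_iff {N : Type*} [AddCommMonoid M] [AddCommMonoid N]
    (e : M ≃+ N) {w : σ → M} {φ : MvPolynomial σ R} {m : M} :
    IsWeightedHomogeneous (e ∘ w) φ (e m) ↔ IsWeightedHomogeneous w φ m := by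
  have hweight : ∀ d : σ →₀ ℕ, weight (e ∘ w) d = e (weight w d) := fun d => by
    simp only [weight_apply, Finsupp.sum, map_sum, map_nsmul, Function.comp_apply]
  simp only [IsWeightedHomogeneous, hweight, e.injective.eq_iff]

lemma weightedHomogeneousComponent_ne_zero [AddCommMonoid M] {w : σ → M}
    {φ : MvPolynomial σ R} {a : M} (ha : a ∈ weight w '' (φ.support : Set (σ →₀ ℕ))) :
    weightedHomogeneousComponent w a φ ≠ 0 := by
  classical
  obtain ⟨d, hd, rfl⟩ := ha
  rw [Ne, ← support_eq_empty, support_weightedHomogeneousComponent,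
    Finset.filter_eq_empty_iff, not_forall]
  exact ⟨d, by simpa using hd⟩

section LinearOrder

variable [AddCommMonoid M] [LinearOrder M] {φ ψ : MvPolynomial σ R}

lemma exists_isGreatest_image_weight (w : σ → M) (hφ : φ ≠ 0) :
    ∃ a, IsGreatest (weight w '' (φ.support : Set (σ →₀ ℕ))) a := by
  classical
  exact ⟨_, by simpa only [Finset.coe_image] using
    Finset.isGreatest_max' _ ((support_nonempty.mpr hφ).image (weight w))⟩

lemma exists_isLeast_image_weight (w : σ → M) (hφ : φ ≠ 0) :
    ∃ a, IsLeast (weight w '' (φ.support : Set (σ →₀ ℕ))) a := by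
  classical
  exact ⟨_, by simpa only [Finset.coe_image] using
    Finset.isLeast_min' _ ((support_nonempty.mpr hφ).image (weight w))⟩

variable [IsOrderedCancelAddMonoid M] {w : σ → M} {a b μ : M}

lemma weightedHomogeneousComponent_add_mul
    (ha : a ∈ upperBounds (weight w '' (φ.support : Set (σ →₀ ℕ))))
    (hb : b ∈ upperBounds (weight w '' (ψ.support : Set (σ →₀ ℕ)))) :
    weightedHomogeneousComponent w (a + b) (φ * ψ) =
      weightedHomogeneousComponent w a φ * weightedHomogeneousComponent w b ψ := by
  classical
  ext d
  rw [coeff_weightedHomogeneousComponent]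
  split_ifs with hd
  · rw [coeff_mul, coeff_mul]
    refine Finset.sum_congr rfl fun x hx => ?_
    rw [coeff_weightedHomogeneousComponent, coeff_weightedHomogeneousComponent]
    by_cases h₁ : coeff x.1 φ = 0
    · simp [h₁]
    by_cases h₂ : coeff x.2 ψ = 0
    · simp [h₂]
    have hsum : weight w x.1 + weight w x.2 = a + b := by
      rw [← map_add, Finset.HasAntidiagonal.mem_antidiagonal.mp hx, hd]
    obtain ⟨rfl, rfl⟩ := (add_eq_add_iff_eq_and_eq (ha ⟨_, mem_support_iff.mpr h₁, rfl⟩)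
      (hb ⟨_, mem_support_iff.mpr h₂, rfl⟩)).mp hsum
    simp
  · exact (((weightedHomogeneousComponent_isWeightedHomogeneous a φ).mul
      (weightedHomogeneousComponent_isWeightedHomogeneous b ψ)).coeff_eq_zero d hd).symm

lemma IsWeightedHomogeneous.eq_add_of_isGreatest [NoZeroDivisors R]
    (h : IsWeightedHomogeneous w (φ * ψ) μ)
    (ha : IsGreatest (weight w '' (φ.support : Set (σ →₀ ℕ))) a)
    (hb : IsGreatest (weight w '' (ψ.support : Set (σ →₀ ℕ))) b) : μ = a + b := by
  by_contra hμ
  apply mul_ne_zero (weightedHomogeneousComponent_ne_zero ha.1)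
    (weightedHomogeneousComponent_ne_zero hb.1)
  rw [← weightedHomogeneousComponent_add_mul ha.2 hb.2]
  exact h.weightedHomogeneousComponent_ne _ (Ne.symm hμ)

lemma IsWeightedHomogeneous.eq_add_of_isLeast [NoZeroDivisors R]
    (h : IsWeightedHomogeneous w (φ * ψ) μ)
    (ha : IsLeast (weight w '' (φ.support : Set (σ →₀ ℕ))) a)
    (hb : IsLeast (weight w '' (ψ.support : Set (σ →₀ ℕ))) b) : μ = a + b :=
  IsWeightedHomogeneous.eq_add_of_isGreatest (w := OrderDual.toDual ∘ w) h ha.dual hb.dual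

lemma IsWeightedHomogeneous.exists_of_mul_left [NoZeroDivisors R]
    (h : IsWeightedHomogeneous w (φ * ψ) μ) (hψ : ψ ≠ 0) :
    ∃ a, IsWeightedHomogeneous w φ a := by
  rcases eq_or_ne φ 0 with rfl | hφ
  · exact ⟨0, isWeightedHomogeneous_zero R w 0⟩
  obtain ⟨a, ha⟩ := exists_isGreatest_image_weight w hφ
  obtain ⟨b, hb⟩ := exists_isGreatest_image_weight w hψ
  obtain ⟨a', ha'⟩ := exists_isLeast_image_weight w hφ
  obtain ⟨b', hb'⟩ := exists_isLeast_image_weight w hψ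
  have hmin_eq_max : a' = a := ((add_eq_add_iff_eq_and_eq (ha'.2 ha.1) (hb'.2 hb.1)).mp
    ((h.eq_add_of_isLeast ha' hb').symm.trans (h.eq_add_of_isGreatest ha hb))).1
  refine ⟨a, fun d hd => le_antisymm (ha.2 ⟨d, mem_support_iff.mpr hd, rfl⟩) ?_⟩
  exact hmin_eq_max ▸ ha'.2 ⟨d, mem_support_iff.mpr hd, rfl⟩

end LinearOrder

end MvPolynomial

section WHomogeneous

variable {n : ℕ} {w : Fin n → ℂ}

lemma isWHomogeneous_iff_exists_isWeightedHomogeneous {p : MvPolynomial (Fin n) ℂ} :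
    IsWHomogeneous n w p ↔ ∃ μ, p.IsWeightedHomogeneous w μ := by
  refine exists_congr fun μ => ?_
  simp only [MvPolynomial.ext_iff, coeff_sum_C_mul_X_mul_pderiv, coeff_C_mul]
  refine ⟨fun h d hd => mul_right_cancel₀ hd (h d), fun h d => ?_⟩
  by_cases hd : coeff d p = 0
  · rw [hd, mul_zero, mul_zero]
  · rw [h hd]

lemma IsWHomogeneous.of_dvd {φ P : MvPolynomial (Fin n) ℂ} (h : IsWHomogeneous n w P)
    (hP : P ≠ 0) (hφ : φ ∣ P) : IsWHomogeneous n w φ := by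
  obtain ⟨ψ, rfl⟩ := hφ
  rw [isWHomogeneous_iff_exists_isWeightedHomogeneous] at h ⊢
  obtain ⟨μ, hμ⟩ := h
  -- `ℂ` has no linear order compatible with addition; transport the weights to `Lex (ℝ × ℝ)`.
  let e : ℂ ≃+ Lex (ℝ × ℝ) := Complex.equivRealProdAddHom.trans (toLexAddEquiv _)
  rw [← isWeightedHomogeneous_comp_addEquiv_iff e] at hμ
  obtain ⟨a, ha⟩ := hμ.exists_of_mul_left (right_ne_zero_of_mul hP)
  rw [← e.apply_symm_apply a, isWeightedHomogeneous_comp_addEquiv_iff] at ha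
  exact ⟨_, ha⟩

lemma isWHomogeneous_prod_pow_iff {ι : Type*} [Fintype ι]
    {g : ι → MvPolynomial (Fin n) ℂ} {m : ι → ℕ} (hg : ∀ k, g k ≠ 0) (hm : ∀ k, m k ≠ 0) :
    IsWHomogeneous n w (∏ k, g k ^ m k) ↔ ∀ k, IsWHomogeneous n w (g k) := by
  refine ⟨fun h k => h.of_dvd ?_ ?_, fun h => ?_⟩
  · exact Finset.prod_ne_zero_iff.mpr fun k _ => pow_ne_zero _ (hg k)
  · exact (dvd_pow_self _ (hm k)).trans (Finset.dvd_prod_of_mem _ (Finset.mem_univ k))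
  · simp only [isWHomogeneous_iff_exists_isWeightedHomogeneous] at h ⊢
    choose μ hμ using h
    exact ⟨_, IsWeightedHomogeneous.prod _ _ _ fun k _ => (hμ k).pow (m k)⟩

end WHomogeneous

theorem wHomogeneous_iff_factors_general (n r : ℕ) (w : Fin n → ℂ)
    (g : Fin r → MvPolynomial (Fin n) ℂ) (m : Fin r → ℕ)
    (hirr : ∀ k, Irreducible (g k)) (hm : ∀ k, 1 ≤ m k) :
    (IsWHomogeneous n w (∏ k, g k ^ m k) ↔ ∀ k, IsWHomogeneous n w (g k)) ∧
    (IsWHomogeneous n w (∏ k, g k ^ m k) ↔ IsWHomogeneous n w (∏ k, g k)) := by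
  have hg : ∀ k, g k ≠ 0 := fun k => (hirr k).ne_zero
  have hpow := isWHomogeneous_prod_pow_iff (w := w) hg fun k => Nat.one_le_iff_ne_zero.mp (hm k)
  have hred := isWHomogeneous_prod_pow_iff (w := w) hg (m := fun _ => 1) fun _ => one_ne_zero
  simp only [pow_one] at hred
  exact ⟨hpow, hpow.trans hred.symm⟩

/-- For `g = g₁^{m₁} ⋯ g_r^{m_r}` a factorization into pairwise non-associate
irreducibles with all `m k ≥ 1`, the following are equivalent:
(a) `g` is `w`-homogeneous; (b) each `g k` is `w`-homogeneous;
(c) `g_red = g₁ ⋯ g_r` is `w`-homogeneous. -/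
theorem wHomogeneous_iff_factors (n r : ℕ) (w : Fin n → ℂ)
    (g : Fin r → MvPolynomial (Fin n) ℂ) (m : Fin r → ℕ)
    (hirr : ∀ k, Irreducible (g k)) (hm : ∀ k, 1 ≤ m k)
    (hna : ∀ k l, k ≠ l → ¬ Associated (g k) (g l)) :
    (IsWHomogeneous n w (∏ k, g k ^ m k) ↔ ∀ k, IsWHomogeneous n w (g k)) ∧
    (IsWHomogeneous n w (∏ k, g k ^ m k) ↔ IsWHomogeneous n w (∏ k, g k)) :=
  wHomogeneous_iff_factors_general n r w g m hirr hm
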